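/- arXiv:2306.06925 — 2 statements merged into one kernel-verified Lean document; each statement's English description precedes it below -/
import Mathlib

section
/- A pair of m×m matrices (C_x, C_y) over GF(2) is dyadic if and only if C_x is invertible and C_y = L U J C_x for some lower unitriangular matrix L and some upper unitriangular matrix U, where J is the anti-diagonal matrix. -/
open Matrix

/-- The binary Pascal matrix over GF(2): entries C(j-1, i-1) mod 2 (1-indexed),
i.e. C(j, i) with 0-indexed `Fin`. -/
def pascal (m : ℕ) : Matrix (Fin m) (Fin m) (ZMod 2) :=
  fun i j => (Nat.choose j.val i.val : ZMod 2)

/-- The anti-diagonal matrix over GF(2), with ones on the anti-diagonal. -/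
def antiDiag (m : ℕ) : Matrix (Fin m) (Fin m) (ZMod 2) :=
  fun i j => if i.val + j.val + 1 = m then 1 else 0
/-- Lower unitriangular matrix over GF(2). -/
def IsLowerUni {m : ℕ} (L : Matrix (Fin m) (Fin m) (ZMod 2)) : Prop :=
  (∀ i, L i i = 1) ∧ ∀ i j : Fin m, i < j → L i j = 0

/-- Upper unitriangular matrix over GF(2). -/
def IsUpperUni {m : ℕ} (U : Matrix (Fin m) (Fin m) (ZMod 2)) : Prop :=
  (∀ i, U i i = 1) ∧ ∀ i j : Fin m, j < i → U i j = 0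
/-- The hybrid matrix whose first `m - r` rows are the first `m - r` rows of `Cx`
and whose last `r` rows are the first `r` rows of `Cy`. -/
def hybrid (m r : ℕ) (Cx Cy : Matrix (Fin m) (Fin m) (ZMod 2)) :
    Matrix (Fin m) (Fin m) (ZMod 2) :=
  fun i j =>
    if i.val < m - r then Cx i j
    else Cy ⟨i.val - (m - r), Nat.lt_of_le_of_lt (Nat.sub_le _ _) i.isLt⟩ j

/-- A dyadic pair: all hybrid matrices are invertible. -/
def DyadicPair {m : ℕ} (Cx Cy : Matrix (Fin m) (Fin m) (ZMod 2)) : Prop :=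
  ∀ r ≤ m, (hybrid m r Cx Cy).det ≠ 0

/-!
Writing `Cy = B * Cx`, right multiplication by `Cx` carries the hybrid matrices of `(1, B)` to
those of `(Cx, Cy)`. The hybrid matrix of `(1, B)` is block lower triangular with an identity
block, and its other diagonal block is the `r`-th leading principal submatrix of `B * J` with its
columns reversed; over GF(2) the reversal does not change the determinant. So `(Cx, Cy)` is dyadic
iff `Cx` is invertible and every leading principal minor of `B * J` is nonzero. Over a field that
is exactly what Doolittle's LU factorisation `B * J = L * U` needs, and over GF(2) the nonzero
pivots on the diagonal of `U` are all `1`. Finally `J * J = 1` turns `B * J = L * U` into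
`Cy = L * U * J * Cx`.
-/

def leadingSubmatrix {R : Type*} {m : ℕ} (r : ℕ) (h : r ≤ m) (A : Matrix (Fin m) (Fin m) R) :
    Matrix (Fin r) (Fin r) R :=
  A.submatrix (Fin.castLE h) (Fin.castLE h)

theorem leadingSubmatrix_self {R : Type*} {m : ℕ} (A : Matrix (Fin m) (Fin m) R) :
    leadingSubmatrix m le_rfl A = A :=
  rfl

theorem leadingSubmatrix_mul_of_isLowerTriangular {R : Type*} [NonUnitalNonAssocSemiring R]
    {m r : ℕ} (h : r ≤ m) {L : Matrix (Fin m) (Fin m) R} (hL : L.IsLowerTriangular)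
    (U : Matrix (Fin m) (Fin m) R) :
    leadingSubmatrix r h (L * U) = leadingSubmatrix r h L * leadingSubmatrix r h U := by
  ext i j
  simp only [leadingSubmatrix, submatrix_apply, mul_apply]
  symm
  refine Finset.sum_of_injOn (Fin.castLE h) (Fin.castLE_injective h).injOn (by simp) ?_ (by simp)
  intro k _ hk
  rw [hL (OrderDual.toDual_lt_toDual.2 ?_), zero_mul]
  by_contra! hki
  exact hk ⟨⟨k, by have := i.isLt; simp [Fin.le_def] at hki; omega⟩, by simp, Fin.ext rfl⟩

section Triangular

variable {R : Type*} [Zero R] {m n : ℕ}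

theorem Matrix.IsLowerTriangular.reindex_fromBlocks {A : Matrix (Fin m) (Fin m) R}
    {D : Matrix (Fin n) (Fin n) R} (hA : A.IsLowerTriangular) (hD : D.IsLowerTriangular)
    (C : Matrix (Fin n) (Fin m) R) :
    (reindex finSumFinEquiv finSumFinEquiv (fromBlocks A 0 C D)).IsLowerTriangular := by
  intro i j hij
  induction i using Fin.addCases <;> induction j using Fin.addCases <;>
    simp only [OrderDual.toDual_lt_toDual, Fin.lt_def, Fin.val_castAdd, Fin.val_natAdd] at hij <;>
    simp
  · exact hA (OrderDual.toDual_lt_toDual.2 hij)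
  · omega
  · exact hD (OrderDual.toDual_lt_toDual.2 (by omega))

theorem Matrix.IsUpperTriangular.reindex_fromBlocks {A : Matrix (Fin m) (Fin m) R}
    {D : Matrix (Fin n) (Fin n) R} (hA : A.IsUpperTriangular) (hD : D.IsUpperTriangular)
    (B : Matrix (Fin m) (Fin n) R) :
    (reindex finSumFinEquiv finSumFinEquiv (fromBlocks A B 0 D)).IsUpperTriangular := by
  intro i j hij
  induction i using Fin.addCases <;> induction j using Fin.addCases <;>
    simp only [id, Fin.lt_def, Fin.val_castAdd, Fin.val_natAdd] at hij <;>
    simp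
  · exact hA hij
  · omega
  · exact hD (by simp only [id, Fin.lt_def]; omega)

end Triangular

theorem exists_lowerUnitriangular_upperTriangular_mul_eq {K : Type*} [Field K] :
    ∀ {m : ℕ} (A : Matrix (Fin m) (Fin m) K),
      (∀ r (h : r < m), (leadingSubmatrix r h.le A).det ≠ 0) →
      ∃ L U : Matrix (Fin m) (Fin m) K, L.IsLowerTriangular ∧ (∀ i, L i i = 1) ∧
        U.IsUpperTriangular ∧ A = L * U
  | 0, _, _ =>
    ⟨1, 1, fun i => i.elim0, fun i => i.elim0, fun i => i.elim0, Subsingleton.elim _ _⟩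
  | m + 1, A, hA => by
    let e : Fin m ⊕ Fin 1 ≃ Fin (m + 1) := finSumFinEquiv
    obtain ⟨L', U', hL', hL'_one, hU', hA'⟩ :=
      exists_lowerUnitriangular_upperTriangular_mul_eq (leadingSubmatrix m m.le_succ A)
        fun r h => hA r (h.trans m.lt_succ_self)
    have hL'_det : IsUnit L'.det := by simp [det_of_isLowerTriangular L' hL', hL'_one]
    have hU'_det : IsUnit U'.det := by
      have := hA m m.lt_succ_self
      rw [hA', det_mul] at this
      exact isUnit_iff_ne_zero.2 (right_ne_zero_of_mul this)
    set b := (A.submatrix e e).toBlocks₁₂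
    set c := (A.submatrix e e).toBlocks₂₁
    set d := (A.submatrix e e).toBlocks₂₂
    have hupper_one : ∀ u : Matrix (Fin 1) (Fin 1) K, u.IsUpperTriangular := fun u i j h =>
      absurd h (by simp [Subsingleton.elim i j])
    -- the last pivot is the Schur complement `d - c * A'⁻¹ * b` of `A' = L' * U'`
    refine ⟨reindex e e (fromBlocks L' 0 (c * U'⁻¹) 1),
      reindex e e (fromBlocks U' (L'⁻¹ * b) 0 (d - c * U'⁻¹ * (L'⁻¹ * b))),
      hL'.reindex_fromBlocks blockTriangular_one _, fun i => ?_,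
      hU'.reindex_fromBlocks (hupper_one _) _, ?_⟩
    · induction i using Fin.addCases <;> simp [e, hL'_one]
    · rw [reindex_apply, reindex_apply, submatrix_mul_equiv, fromBlocks_multiply]
      have hA_blocks :
          A = (fromBlocks (leadingSubmatrix m m.le_succ A) b c d).submatrix e.symm e.symm := by
        rw [show leadingSubmatrix m m.le_succ A = (A.submatrix e e).toBlocks₁₁ from rfl,
          fromBlocks_toBlocks, submatrix_submatrix, e.self_comp_symm, submatrix_id_id]
      rw [hA_blocks, hA']
      congr 2
      · simp
      · simp [mul_nonsing_inv_cancel_left _ _ hL'_det]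
      · simp [nonsing_inv_mul_cancel_right _ _ hU'_det]
      · simp

namespace IsLowerUni

variable {m : ℕ} {L : Matrix (Fin m) (Fin m) (ZMod 2)}

theorem isLowerTriangular (hL : IsLowerUni L) : L.IsLowerTriangular :=
  fun i j hij => hL.2 i j hij

theorem det_eq_one (hL : IsLowerUni L) : L.det = 1 := by
  simp [det_of_isLowerTriangular L hL.isLowerTriangular, hL.1]

theorem leadingSubmatrix {r : ℕ} (h : r ≤ m) (hL : IsLowerUni L) :
    IsLowerUni (leadingSubmatrix r h L) :=
  ⟨fun _ => hL.1 _, fun _ _ hij => hL.2 _ _ hij⟩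

end IsLowerUni

namespace IsUpperUni

variable {m : ℕ} {U : Matrix (Fin m) (Fin m) (ZMod 2)}

theorem isUpperTriangular (hU : IsUpperUni U) : U.IsUpperTriangular :=
  fun i j hij => hU.2 i j hij

theorem det_eq_one (hU : IsUpperUni U) : U.det = 1 := by
  simp [det_of_isUpperTriangular hU.isUpperTriangular, hU.1]

theorem leadingSubmatrix {r : ℕ} (h : r ≤ m) (hU : IsUpperUni U) :
    IsUpperUni (leadingSubmatrix r h U) :=
  ⟨fun _ => hU.1 _, fun _ _ hij => hU.2 _ _ hij⟩

end IsUpperUni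

theorem det_leadingSubmatrix_mul_of_isLowerUni_of_isUpperUni {m : ℕ}
    {L U : Matrix (Fin m) (Fin m) (ZMod 2)} (hL : IsLowerUni L) (hU : IsUpperUni U) (r : ℕ)
    (h : r ≤ m) : (leadingSubmatrix r h (L * U)).det = 1 := by
  rw [leadingSubmatrix_mul_of_isLowerTriangular h hL.isLowerTriangular, det_mul,
    (hL.leadingSubmatrix h).det_eq_one, (hU.leadingSubmatrix h).det_eq_one, one_mul]

theorem exists_isLowerUni_isUpperUni_mul_eq {m : ℕ} (A : Matrix (Fin m) (Fin m) (ZMod 2))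
    (hA : ∀ r (h : r ≤ m), (leadingSubmatrix r h A).det ≠ 0) :
    ∃ L U, IsLowerUni L ∧ IsUpperUni U ∧ A = L * U := by
  obtain ⟨L, U, hL, hL_one, hU, rfl⟩ :=
    exists_lowerUnitriangular_upperTriangular_mul_eq A fun r h => hA r h.le
  have hdet : ∏ i, U i i ≠ 0 := by
    have := hA m le_rfl
    rwa [leadingSubmatrix_self, det_mul, det_of_isLowerTriangular L hL,
      det_of_isUpperTriangular hU, Finset.prod_eq_one fun i _ => hL_one i, one_mul] at this
  exact ⟨L, U, ⟨hL_one, fun i j hij => hL hij⟩,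
    ⟨fun i => Fin.eq_one_of_ne_zero _ (Finset.prod_ne_zero_iff.1 hdet i (Finset.mem_univ _)),
      fun i j hij => hU hij⟩, rfl⟩

theorem antiDiag_eq_submatrix_one (m : ℕ) :
    antiDiag m = (1 : Matrix (Fin m) (Fin m) (ZMod 2)).submatrix id Fin.rev := by
  ext i j
  simp only [antiDiag, submatrix_apply, id, one_apply, Fin.ext_iff, Fin.val_rev]
  congr 1
  apply propext
  omega

theorem mul_antiDiag {m : ℕ} (B : Matrix (Fin m) (Fin m) (ZMod 2)) :
    B * antiDiag m = B.submatrix id Fin.rev := by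
  rw [antiDiag_eq_submatrix_one]
  exact mul_submatrix_one (Equiv.refl _) Fin.rev B

theorem mul_antiDiag_mul_antiDiag {m : ℕ} (B : Matrix (Fin m) (Fin m) (ZMod 2)) :
    B * antiDiag m * antiDiag m = B := by
  rw [mul_antiDiag, mul_antiDiag, submatrix_submatrix, Function.comp_id,
    Fin.rev_involutive.comp_self, submatrix_id_id]

theorem det_submatrix_id_perm_of_charTwo {R n : Type*} [CommRing R] [CharP R 2] [Fintype n]
    [DecidableEq n] (σ : Equiv.Perm n) (M : Matrix n n R) : (M.submatrix id σ).det = M.det := by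
  rw [det_permute']
  rcases Int.units_eq_one_or (Equiv.Perm.sign σ) with h | h <;> simp [h, CharTwo.neg_eq]

theorem hybrid_mul {m : ℕ} (r : ℕ) (Cx Cy M : Matrix (Fin m) (Fin m) (ZMod 2)) :
    hybrid m r (Cx * M) (Cy * M) = hybrid m r Cx Cy * M := by
  ext i j
  by_cases h : i.val < m - r <;> simp [hybrid, mul_apply, h]

theorem det_hybrid_one {m r : ℕ} (h : r ≤ m) (B : Matrix (Fin m) (Fin m) (ZMod 2)) :
    (hybrid m r 1 B).det = (leadingSubmatrix r h (B * antiDiag m)).det := by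
  let e : Fin (m - r) ⊕ Fin r ≃ Fin m := finSumFinEquiv.trans (finCongr (Nat.sub_add_cancel h))
  have he_inl (a : Fin (m - r)) : (e (.inl a) : ℕ) = a := rfl
  have he_inr (a : Fin r) : (e (.inr a) : ℕ) = m - r + a := rfl
  let H := (hybrid m r 1 B).submatrix e e
  have h11 : H.toBlocks₁₁ = 1 := by
    ext a b
    simp [H, toBlocks₁₁, hybrid, he_inl, one_apply, Fin.ext_iff]
  have h12 : H.toBlocks₁₂ = 0 := by
    ext a b
    simp [H, toBlocks₁₂, hybrid, he_inl, one_apply]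
  have h22 :
      H.toBlocks₂₂ = (leadingSubmatrix r h (B * antiDiag m)).submatrix id Fin.revPerm := by
    ext a b
    simp [H, toBlocks₂₂, hybrid, he_inr, leadingSubmatrix, mul_antiDiag]
    congr 1
    ext
    simp [he_inr]
    omega
  rw [← det_submatrix_equiv_self e]
  change H.det = _
  rw [← fromBlocks_toBlocks H, h11, h12, h22,
    det_fromBlocks_zero₁₂, det_one, one_mul, det_submatrix_id_perm_of_charTwo]

theorem hybrid_zero {m : ℕ} (Cx Cy : Matrix (Fin m) (Fin m) (ZMod 2)) :
    hybrid m 0 Cx Cy = Cx := by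
  ext i j
  simp [hybrid]

theorem DyadicPair.det_left_ne_zero {m : ℕ} {Cx Cy : Matrix (Fin m) (Fin m) (ZMod 2)}
    (hd : DyadicPair Cx Cy) : Cx.det ≠ 0 := by
  simpa [hybrid_zero] using hd 0 m.zero_le

theorem det_hybrid_mul_right {m r : ℕ} (h : r ≤ m) (Cx B : Matrix (Fin m) (Fin m) (ZMod 2)) :
    (hybrid m r Cx (B * Cx)).det = (leadingSubmatrix r h (B * antiDiag m)).det * Cx.det := by
  rw [← det_hybrid_one h, ← det_mul, ← hybrid_mul, one_mul]

theorem dyadicPair_mul_right_iff {m : ℕ} (Cx B : Matrix (Fin m) (Fin m) (ZMod 2)) :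
    DyadicPair Cx (B * Cx) ↔
      Cx.det ≠ 0 ∧ ∀ r (h : r ≤ m), (leadingSubmatrix r h (B * antiDiag m)).det ≠ 0 := by
  refine ⟨fun hd => ⟨hd.det_left_ne_zero, fun r h => ?_⟩, fun ⟨hCx, hB⟩ r h => ?_⟩
  · exact left_ne_zero_of_mul (det_hybrid_mul_right h Cx B ▸ hd r h)
  · rw [det_hybrid_mul_right h]
    exact mul_ne_zero (hB r h) hCx

/-- A pair `(C_x, C_y)` is dyadic iff `C_x` is invertible and
`C_y = L U J C_x` for some lower unitriangular `L` and upper unitriangular `U`. -/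
theorem dyadicPair_iff (m : ℕ) (Cx Cy : Matrix (Fin m) (Fin m) (ZMod 2)) :
    DyadicPair Cx Cy ↔
      IsUnit Cx ∧ ∃ L U, IsLowerUni L ∧ IsUpperUni U ∧
        Cy = L * U * antiDiag m * Cx := by
  constructor
  · intro hd
    have hCx : IsUnit Cx.det := isUnit_iff_ne_zero.2 hd.det_left_ne_zero
    obtain ⟨B, rfl⟩ : ∃ B, Cy = B * Cx :=
      ⟨Cy * Cx⁻¹, (nonsing_inv_mul_cancel_right Cx Cy hCx).symm⟩
    obtain ⟨L, U, hL, hU, hLU⟩ :=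
      exists_isLowerUni_isUpperUni_mul_eq _ ((dyadicPair_mul_right_iff Cx B).1 hd).2
    exact ⟨(isUnit_iff_isUnit_det Cx).2 hCx, L, U, hL, hU,
      by rw [← hLU, mul_antiDiag_mul_antiDiag]⟩
  · rintro ⟨hCx, L, U, hL, hU, rfl⟩
    refine (dyadicPair_mul_right_iff Cx _).2 ⟨?_, fun r h => ?_⟩
    · exact isUnit_iff_ne_zero.1 ((isUnit_iff_isUnit_det Cx).1 hCx)
    · rw [mul_antiDiag_mul_antiDiag, det_leadingSubmatrix_mul_of_isLowerUni_of_isUpperUni hL hU]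
      exact one_ne_zero
end

section
/- A pair of m×m matrices (C_x, C_y) over GF(2) is progressive if and only if C_x = L_x U and C_y = L_y P U for some upper unitriangular matrix U, lower unitriangular matrices L_x, L_y, and the binary Pascal matrix P. -/
open Matrix

/-- A progressive pair: for all `r ≤ k ≤ m`, the hybrid matrix built from the
leading `k × k` blocks of `Cx` and `Cy` is invertible. -/
def ProgressivePair {m : ℕ} (Cx Cy : Matrix (Fin m) (Fin m) (ZMod 2)) : Prop :=
  ∀ k, ∀ hk : k ≤ m, ∀ r ≤ k,
    (hybrid k r (Cx.submatrix (Fin.castLE hk) (Fin.castLE hk))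
                (Cy.submatrix (Fin.castLE hk) (Fin.castLE hk))).det ≠ 0

/-!
Both sides are invariant under `(Cx, Cy) ↦ (Lx * Cx * U, Ly * Cy * U)` with `Lx`, `Ly` lower and
`U` upper unitriangular: leading blocks of such products are products of leading blocks, and on a
hybrid matrix `Lx` and `Ly` act through the block-diagonal matrix of their leading blocks.
Progressivity gives nonzero leading minors of `Cx` and `Cy`, hence LU decompositions, which reduce
the pair to `(1, V)` with `V` upper unitriangular. The hybrid determinants of `(1, V)` are those of
the blocks of `V` formed by its first `r` rows and `r` consecutive columns. Over GF(2) each equals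
1, and expanding along the last row determines the corner entry of such a block from the others,
so `V` is forced column by column to be `P`; conversely these blocks of `P` have determinant 1 by
Vandermonde's identity `C(x + j, i) = ∑ₜ C(x, i - t) C(j, t)`.
-/

theorem Fin.sum_univ_eq_sum_castLE {M : Type*} [AddCommMonoid M] {k m : ℕ} (hk : k ≤ m)
    {f : Fin m → M} (hf : ∀ i : Fin m, k ≤ i → f i = 0) :
    ∑ i, f i = ∑ i : Fin k, f (Fin.castLE hk i) :=
  (Fintype.sum_of_injective _ (Fin.castLE_injective hk) _ f
    (by simpa [Fin.range_castLE] using hf) fun _ => rfl).symm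

namespace Matrix

variable {R : Type*}

section Semiring

variable [Semiring R] {m k : ℕ}

theorem submatrix_castLE_mul_of_isLowerTriangular {n ι : Type*} {L : Matrix (Fin m) (Fin m) R}
    (hL : L.IsLowerTriangular) (hk : k ≤ m) (A : Matrix (Fin m) n R) (g : ι → n) :
    (L * A).submatrix (Fin.castLE hk) g =
      L.submatrix (Fin.castLE hk) (Fin.castLE hk) * A.submatrix (Fin.castLE hk) g := by
  ext i j
  exact Fin.sum_univ_eq_sum_castLE hk fun t ht =>
    mul_eq_zero_of_left (hL (show Fin.castLE hk i < t from i.isLt.trans_le ht)) _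

theorem submatrix_castLE_mul_of_isUpperTriangular {n ι : Type*} {U : Matrix (Fin m) (Fin m) R}
    (hU : U.IsUpperTriangular) (hk : k ≤ m) (A : Matrix n (Fin m) R) (f : ι → n) :
    (A * U).submatrix f (Fin.castLE hk) =
      A.submatrix f (Fin.castLE hk) * U.submatrix (Fin.castLE hk) (Fin.castLE hk) := by
  ext i j
  exact Fin.sum_univ_eq_sum_castLE hk fun t ht =>
    mul_eq_zero_of_right _ (hU (show Fin.castLE hk j < t from j.isLt.trans_le ht))

theorem mul_apply_self_of_isUpperTriangular {n : Type*} [Fintype n] [LinearOrder n]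
    {A B : Matrix n n R} (hA : A.IsUpperTriangular) (hB : B.IsUpperTriangular) (i : n) :
    (A * B) i i = A i i * B i i := by
  refine Fintype.sum_eq_single i fun t hti => ?_
  rcases lt_or_gt_of_ne hti with h | h
  · exact mul_eq_zero_of_left (hA h) _
  · exact mul_eq_zero_of_right _ (hB h)

theorem fromBlocks_zero_zero_mul_fromRows {m₁ m₂ n : Type*} [Fintype m₁] [Fintype m₂]
    (X : Matrix m₁ m₁ R) (Y : Matrix m₂ m₂ R) (A : Matrix m₁ n R) (B : Matrix m₂ n R) :
    fromBlocks X 0 0 Y * fromRows A B = fromRows (X * A) (Y * B) := by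
  simp [fromBlocks_mul_fromRows]

end Semiring

section CommRing

variable [CommRing R]

theorem det_of_choose_add (x r : ℕ) :
    (of fun i j : Fin r => ((x + j).choose i : R)).det = 1 := by
  -- Vandermonde's identity factors the matrix as lower unitriangular times upper unitriangular.
  let A : Matrix (Fin r) (Fin r) R := of fun i t => if t ≤ i then (x.choose (i - t) : R) else 0
  have hA : A.det = 1 := by
    rw [det_of_isLowerTriangular A fun i t (hit : i < t) => if_neg (not_le.2 hit)]
    simp [A]
  let B : Matrix (Fin r) (Fin r) R := of fun t j => ((j : ℕ).choose t : R)
  have hB : B.det = 1 := by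
    rw [det_of_isUpperTriangular fun t j (hjt : j < t) => by
      simp [B, Nat.choose_eq_zero_of_lt (show (j : ℕ) < t from hjt)]]
    simp [B]
  suffices h : of (fun i j : Fin r => ((x + j).choose i : R)) = A * B by
    rw [h, det_mul, hA, hB, one_mul]
  ext i j
  simp only [of_apply, mul_apply, A, B, ite_mul, zero_mul, Fin.le_iff_val_le_val]
  rw [Fin.sum_univ_eq_sum_range
    (fun t => if t ≤ i then (x.choose (i - t) : R) * ((j : ℕ).choose t) else 0)]
  have hrange : (Finset.range r).filter (· ≤ (i : ℕ)) = Finset.range (i + 1) := by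
    ext t; simp only [Finset.mem_filter, Finset.mem_range]; omega
  rw [← Finset.sum_filter, hrange, add_comm, Nat.add_choose_eq,
    Finset.Nat.sum_antidiagonal_eq_sum_range_succ fun a b => (j : ℕ).choose a * x.choose b]
  push_cast
  simp only [mul_comm]

theorem det_sub_det_of_eq_of_ne_last {n : ℕ} {A B : Matrix (Fin (n + 1)) (Fin (n + 1)) R}
    (h : ∀ i j, (i ≠ Fin.last n ∨ j ≠ Fin.last n) → A i j = B i j) :
    A.det - B.det = (A (Fin.last n) (Fin.last n) - B (Fin.last n) (Fin.last n)) *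
      (A.submatrix Fin.castSucc Fin.castSucc).det := by
  have hminor : ∀ j : Fin (n + 1), A.submatrix (Fin.last n).succAbove j.succAbove =
      B.submatrix (Fin.last n).succAbove j.succAbove := fun j => by
    ext a b
    exact h _ _ (Or.inl (by simp [Fin.succAbove_last, Fin.castSucc_ne_last]))
  rw [det_succ_row A (Fin.last n), det_succ_row B (Fin.last n), ← Finset.sum_sub_distrib,
    Fintype.sum_eq_single (Fin.last n)]
  · rw [← hminor, Fin.succAbove_last, Fin.val_last, Even.neg_one_pow ⟨n, rfl⟩]
    ring
  · intro j hj
    rw [hminor, h _ _ (Or.inr hj), sub_self]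

theorem eq_of_eq_of_ne_last_of_det_eq [IsDomain R] {n : ℕ}
    {A B : Matrix (Fin (n + 1)) (Fin (n + 1)) R}
    (h : ∀ i j, (i ≠ Fin.last n ∨ j ≠ Fin.last n) → A i j = B i j) (hdet : A.det = B.det)
    (hminor : (A.submatrix Fin.castSucc Fin.castSucc).det ≠ 0) : A = B := by
  have hcorner : A (Fin.last n) (Fin.last n) = B (Fin.last n) (Fin.last n) := by
    have := det_sub_det_of_eq_of_ne_last h
    rw [hdet, sub_self, eq_comm, mul_eq_zero, sub_eq_zero] at this
    exact this.resolve_right hminor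
  ext i j
  by_cases hij : i ≠ Fin.last n ∨ j ≠ Fin.last n
  · exact h i j hij
  · obtain ⟨rfl, rfl⟩ : i = Fin.last n ∧ j = Fin.last n := by tauto
    exact hcorner

end CommRing

theorem exists_isLowerTriangular_mul_isUpperTriangular {K : Type*} [Field K] {m : ℕ}
    (C : Matrix (Fin m) (Fin m) K)
    (hC : ∀ k (hk : k < m), (C.submatrix (Fin.castLE hk.le) (Fin.castLE hk.le)).det ≠ 0) :
    ∃ L : Matrix (Fin m) (Fin m) K,
      L.IsLowerTriangular ∧ (∀ i, L i i = 1) ∧ (L * C).IsUpperTriangular := by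
  -- Row `i` of `L` subtracts from row `i` of `C` the combination of the earlier rows that cancels
  -- its first `i` entries; the coefficients come from the inverse of the leading `i × i` block.
  let a (i : Fin m) : Fin i → K :=
    -((fun t => C i (Fin.castLE i.isLt.le t)) ᵥ*
      (C.submatrix (Fin.castLE i.isLt.le) (Fin.castLE i.isLt.le))⁻¹)
  let L : Matrix (Fin m) (Fin m) K :=
    of fun i => Pi.single i 1 + Function.extend (Fin.castLE i.isLt.le) (a i) 0
  have hext : ∀ i s : Fin m, i ≤ s → Function.extend (Fin.castLE i.isLt.le) (a i) 0 s = 0 :=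
    fun i s his => Function.extend_apply' _ _ _ fun ⟨t, ht⟩ => by
      rw [← ht] at his; exact absurd t.isLt (not_lt.2 his)
  refine ⟨L, fun i s (his : i < s) => ?_, fun i => ?_, fun i j (hji : j < i) => ?_⟩
  · simp [L, hext i s his.le, his.ne']
  · simp [L, hext i i le_rfl]
  · have hsum : ∑ s, Function.extend (Fin.castLE i.isLt.le) (a i) 0 s * C s j =
        ∑ t : Fin i, a i t * C (Fin.castLE i.isLt.le t) j :=
      (Fintype.sum_of_injective _ (Fin.castLE_injective _) _ _
        (fun s hs => by rw [Function.extend_apply' _ _ _ hs, Pi.zero_apply, zero_mul])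
        fun t => by rw [(Fin.castLE_injective _).extend_apply]).symm
    have hvec : a i ᵥ* C.submatrix (Fin.castLE i.isLt.le) (Fin.castLE i.isLt.le) =
        -fun t => C i (Fin.castLE i.isLt.le t) := by
      rw [neg_vecMul, vecMul_vecMul, nonsing_inv_mul _ (isUnit_iff_ne_zero.2 (hC _ i.isLt)),
        vecMul_one]
    have := congr_fun hvec ⟨j, hji⟩
    simp only [mul_apply, L, of_apply, Pi.add_apply, add_mul, Finset.sum_add_distrib, hsum]
    rw [Fintype.sum_eq_single i fun s hs => by rw [Pi.single_eq_of_ne hs, zero_mul],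
      Pi.single_eq_same, one_mul, add_comm]
    exact eq_neg_iff_add_eq_zero.1 this

end Matrix

theorem ZMod.eq_one_of_ne_zero {a : ZMod 2} (h : a ≠ 0) : a = 1 := Fin.eq_one_of_ne_zero a h

section Unitriangular

variable {m : ℕ} {A B L U : Matrix (Fin m) (Fin m) (ZMod 2)}

theorem IsLowerUni.isLowerTriangular_s14 (hL : IsLowerUni L) : L.IsLowerTriangular :=
  fun _ _ hij => hL.2 _ _ hij

theorem IsUpperUni.isUpperTriangular_s14 (hU : IsUpperUni U) : U.IsUpperTriangular :=
  fun _ _ hij => hU.2 _ _ hij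

theorem isUpperUni_transpose : IsUpperUni Lᵀ ↔ IsLowerUni L :=
  ⟨fun h => ⟨h.1, fun i j hij => h.2 j i hij⟩, fun h => ⟨h.1, fun i j hij => h.2 j i hij⟩⟩

theorem IsLowerUni.det_eq_one_s14 (hL : IsLowerUni L) : L.det = 1 := by
  simp [det_of_isLowerTriangular L hL.isLowerTriangular_s14, hL.1]

theorem IsUpperUni.det_eq_one_s14 (hU : IsUpperUni U) : U.det = 1 := by
  simp [det_of_isUpperTriangular hU.isUpperTriangular_s14, hU.1]

theorem IsLowerUni.isUnit_det (hL : IsLowerUni L) : IsUnit L.det :=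
  hL.det_eq_one_s14 ▸ isUnit_one

theorem IsUpperUni.isUnit_det (hU : IsUpperUni U) : IsUnit U.det :=
  hU.det_eq_one_s14 ▸ isUnit_one

theorem IsLowerUni.submatrix_castLE {k : ℕ} (hL : IsLowerUni L) (hk : k ≤ m) :
    IsLowerUni (L.submatrix (Fin.castLE hk) (Fin.castLE hk)) :=
  ⟨fun _ => hL.1 _, fun _ _ hij => hL.2 _ _ hij⟩

theorem IsUpperUni.submatrix_castLE {k : ℕ} (hU : IsUpperUni U) (hk : k ≤ m) :
    IsUpperUni (U.submatrix (Fin.castLE hk) (Fin.castLE hk)) :=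
  ⟨fun _ => hU.1 _, fun _ _ hij => hU.2 _ _ hij⟩

theorem IsUpperUni.mul (hA : IsUpperUni A) (hB : IsUpperUni B) : IsUpperUni (A * B) :=
  ⟨fun i => by
    rw [mul_apply_self_of_isUpperTriangular hA.isUpperTriangular_s14 hB.isUpperTriangular_s14, hA.1, hB.1,
      one_mul],
   hA.isUpperTriangular_s14.mul hB.isUpperTriangular_s14⟩

theorem IsUpperUni.inv (hU : IsUpperUni U) : IsUpperUni U⁻¹ := by
  have := U.invertibleOfIsUnitDet hU.isUnit_det
  have hinv : U⁻¹.IsUpperTriangular :=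
    blockTriangular_inv_of_blockTriangular hU.isUpperTriangular_s14
  refine ⟨fun i => ?_, fun i j hij => hinv hij⟩
  have := congr_fun₂ (nonsing_inv_mul U hU.isUnit_det) i i
  rwa [mul_apply_self_of_isUpperTriangular hinv hU.isUpperTriangular_s14, hU.1, mul_one,
    one_apply_eq] at this

theorem IsLowerUni.inv (hL : IsLowerUni L) : IsLowerUni L⁻¹ := by
  rw [← isUpperUni_transpose, transpose_nonsing_inv]
  exact (isUpperUni_transpose.2 hL).inv

theorem exists_isLowerUni_isUpperUni_eq_mul {m : ℕ} (C : Matrix (Fin m) (Fin m) (ZMod 2))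
    (hC : ∀ k (hk : k ≤ m), (C.submatrix (Fin.castLE hk) (Fin.castLE hk)).det ≠ 0) :
    ∃ L U, IsLowerUni L ∧ IsUpperUni U ∧ C = L * U := by
  obtain ⟨L, hLtri, hLdiag, hU⟩ := exists_isLowerTriangular_mul_isUpperTriangular C
    fun k hk => hC k hk.le
  have hL : IsLowerUni L := ⟨hLdiag, fun _ _ hij => hLtri hij⟩
  have hdet : (L * C).det ≠ 0 := by
    simpa [hL.det_eq_one_s14] using hC m le_rfl
  refine ⟨L⁻¹, L * C, hL.inv, ⟨fun i => ZMod.eq_one_of_ne_zero ?_, hU⟩, ?_⟩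
  · rw [det_of_isUpperTriangular hU, Finset.prod_ne_zero_iff] at hdet
    exact hdet i (Finset.mem_univ i)
  · rw [← mul_assoc, nonsing_inv_mul _ hL.isUnit_det, one_mul]

end Unitriangular

section Hybrid

variable {k r : ℕ}

theorem hybrid_zero_s14 (A B : Matrix (Fin k) (Fin k) (ZMod 2)) : hybrid k 0 A B = A := by
  ext i j
  simp [hybrid]

theorem hybrid_self (A B : Matrix (Fin k) (Fin k) (ZMod 2)) : hybrid k k A B = B := by
  ext i j
  simp [hybrid]

theorem hybrid_mul_s14 (A B U : Matrix (Fin k) (Fin k) (ZMod 2)) :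
    hybrid k r (A * U) (B * U) = hybrid k r A B * U := by
  ext i j
  by_cases hi : (i : ℕ) < k - r <;> simp [hybrid, hi, mul_apply]

def finSubSumEquiv (hr : r ≤ k) : Fin (k - r) ⊕ Fin r ≃ Fin k :=
  finSumFinEquiv.trans (finCongr (Nat.sub_add_cancel hr))

theorem hybrid_submatrix_finSubSumEquiv (hr : r ≤ k) (A B : Matrix (Fin k) (Fin k) (ZMod 2)) :
    (hybrid k r A B).submatrix (finSubSumEquiv hr) (finSubSumEquiv hr) =
      fromRows (A.submatrix (Fin.castLE (k.sub_le r)) (finSubSumEquiv hr))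
        (B.submatrix (Fin.castLE hr) (finSubSumEquiv hr)) := by
  ext (i | i) j <;> simp [hybrid, finSubSumEquiv] <;> rfl

theorem det_hybrid_mul_of_isLowerUni (hr : r ≤ k) {Lx Ly : Matrix (Fin k) (Fin k) (ZMod 2)}
    (hLx : IsLowerUni Lx) (hLy : IsLowerUni Ly) (A B : Matrix (Fin k) (Fin k) (ZMod 2)) :
    (hybrid k r (Lx * A) (Ly * B)).det = (hybrid k r A B).det := by
  rw [← det_submatrix_equiv_self (finSubSumEquiv hr), hybrid_submatrix_finSubSumEquiv,
    ← det_submatrix_equiv_self (finSubSumEquiv hr) (hybrid k r A B),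
    hybrid_submatrix_finSubSumEquiv,
    submatrix_castLE_mul_of_isLowerTriangular hLx.isLowerTriangular_s14,
    submatrix_castLE_mul_of_isLowerTriangular hLy.isLowerTriangular_s14,
    ← fromBlocks_zero_zero_mul_fromRows,
    det_mul, det_fromBlocks_zero₂₁, (hLx.submatrix_castLE _).det_eq_one_s14,
    (hLy.submatrix_castLE _).det_eq_one_s14, one_mul, one_mul]

def topBlock {R : Type*} {m : ℕ} (C : Matrix (Fin m) (Fin m) R) (x r : ℕ) (h : x + r ≤ m) :
    Matrix (Fin r) (Fin r) R :=
  of fun a b => C ⟨a, by omega⟩ ⟨x + b, by omega⟩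

theorem det_hybrid_one_s14 (hr : r ≤ k) (C : Matrix (Fin k) (Fin k) (ZMod 2)) :
    (hybrid k r 1 C).det = (topBlock C (k - r) r (Nat.sub_add_cancel hr).le).det := by
  rw [← det_submatrix_equiv_self (finSubSumEquiv hr), hybrid_submatrix_finSubSumEquiv]
  have hblock : fromRows
      ((1 : Matrix (Fin k) (Fin k) (ZMod 2)).submatrix (Fin.castLE (k.sub_le r)) (finSubSumEquiv hr))
      (C.submatrix (Fin.castLE hr) (finSubSumEquiv hr)) =
      fromBlocks 1 0 (C.submatrix (Fin.castLE hr) (finSubSumEquiv hr ∘ Sum.inl))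
        (topBlock C (k - r) r (Nat.sub_add_cancel hr).le) := by
    ext (i | i) (j | j) <;> simp [finSubSumEquiv, topBlock, one_apply, Fin.ext_iff]
    · omega
    · rfl
  rw [hblock, det_fromBlocks_zero₁₂, det_one, one_mul]

end Hybrid

section Progressive

variable {m : ℕ}

theorem ProgressivePair.det_fst_ne_zero {Cx Cy : Matrix (Fin m) (Fin m) (ZMod 2)}
    (h : ProgressivePair Cx Cy) (k : ℕ) (hk : k ≤ m) :
    (Cx.submatrix (Fin.castLE hk) (Fin.castLE hk)).det ≠ 0 := by
  simpa [hybrid_zero_s14] using h k hk 0 k.zero_le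

theorem ProgressivePair.det_snd_ne_zero {Cx Cy : Matrix (Fin m) (Fin m) (ZMod 2)}
    (h : ProgressivePair Cx Cy) (k : ℕ) (hk : k ≤ m) :
    (Cy.submatrix (Fin.castLE hk) (Fin.castLE hk)).det ≠ 0 := by
  simpa [hybrid_self] using h k hk k le_rfl

theorem ProgressivePair.det_topBlock_ne_zero {V : Matrix (Fin m) (Fin m) (ZMod 2)}
    (h : ProgressivePair 1 V) {x r : ℕ} (hxr : x + r ≤ m) : (topBlock V x r hxr).det ≠ 0 := by
  have := h (x + r) hxr r (Nat.le_add_left r x)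
  rw [submatrix_one _ (Fin.castLE_injective hxr), det_hybrid_one_s14 (Nat.le_add_left r x)] at this
  convert this using 2
  ext a b
  simp [topBlock]

theorem progressivePair_mul_iff {Lx Ly U : Matrix (Fin m) (Fin m) (ZMod 2)} (hLx : IsLowerUni Lx)
    (hLy : IsLowerUni Ly) (hU : IsUpperUni U) (A B : Matrix (Fin m) (Fin m) (ZMod 2)) :
    ProgressivePair (Lx * A * U) (Ly * B * U) ↔ ProgressivePair A B := by
  refine forall_congr' fun k => forall_congr' fun hk => forall₂_congr fun r hr => ?_
  rw [submatrix_castLE_mul_of_isUpperTriangular hU.isUpperTriangular_s14,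
    submatrix_castLE_mul_of_isUpperTriangular hU.isUpperTriangular_s14,
    submatrix_castLE_mul_of_isLowerTriangular hLx.isLowerTriangular_s14,
    submatrix_castLE_mul_of_isLowerTriangular hLy.isLowerTriangular_s14, hybrid_mul_s14, det_mul,
    (hU.submatrix_castLE hk).det_eq_one_s14, mul_one,
    det_hybrid_mul_of_isLowerUni hr (hLx.submatrix_castLE hk) (hLy.submatrix_castLE hk)]

theorem progressivePair_one_pascal :
    ProgressivePair (1 : Matrix (Fin m) (Fin m) (ZMod 2)) (pascal m) := by
  intro k hk r hr
  rw [submatrix_one _ (Fin.castLE_injective hk), det_hybrid_one_s14 hr]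
  exact (det_of_choose_add (k - r) r).trans_ne one_ne_zero

theorem eq_pascal_of_progressivePair_one {V : Matrix (Fin m) (Fin m) (ZMod 2)}
    (hV : V.IsUpperTriangular) (h : ProgressivePair 1 V) : V = pascal m := by
  ext i j
  induction j using WellFoundedLT.induction generalizing i with
  | _ j ihj =>
  induction i using WellFoundedLT.induction with
  | _ i ihi =>
  rcases lt_or_ge j i with hji | hij
  · simp [hV hji, pascal, Nat.choose_eq_zero_of_lt (show (j : ℕ) < i from hji)]
  -- The top block with corner `(i, j)` is Pascal's away from the corner by induction, and both
  -- blocks have determinant 1.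
  have hxr : (j : ℕ) - i + (i + 1) ≤ m := by omega
  have hblock : topBlock V (j - i) (i + 1) hxr = topBlock (pascal m) (j - i) (i + 1) hxr := by
    refine eq_of_eq_of_ne_last_of_det_eq (fun a b hab => ?_) ?_ ?_
    · simp only [topBlock, of_apply]
      rcases eq_or_ne b (Fin.last i) with rfl | hb
      · have ha : (a : ℕ) < i := Fin.val_lt_last (hab.resolve_right (not_not.2 rfl))
        convert ihi ⟨a, by omega⟩ ha using 2 <;> ext <;> simp <;> omega
      · have hb : (b : ℕ) < i := Fin.val_lt_last hb
        exact ihj ⟨j - i + b, by omega⟩ (show (j : ℕ) - i + b < j by omega) _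
    · rw [ZMod.eq_one_of_ne_zero (h.det_topBlock_ne_zero hxr)]
      exact (det_of_choose_add _ _).symm
    · exact h.det_topBlock_ne_zero (by omega : (j : ℕ) - i + i ≤ m)
  have := congr_fun₂ hblock (Fin.last i) (Fin.last i)
  simp only [topBlock, of_apply, Fin.val_last] at this
  convert this using 2 <;> ext <;> simp <;> omega

end Progressive

/-- A pair `(C_x, C_y)` is progressive iff `C_x = L_x U` and `C_y = L_y P U`
for some upper unitriangular `U` and lower unitriangular `L_x`, `L_y`. -/
theorem progressivePair_iff (m : ℕ) (Cx Cy : Matrix (Fin m) (Fin m) (ZMod 2)) :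
    ProgressivePair Cx Cy ↔
      ∃ U Lx Ly, IsUpperUni U ∧ IsLowerUni Lx ∧ IsLowerUni Ly ∧
        Cx = Lx * U ∧ Cy = Ly * pascal m * U := by
  constructor
  · intro h
    obtain ⟨Lx, Ux, hLx, hUx, rfl⟩ := exists_isLowerUni_isUpperUni_eq_mul Cx h.det_fst_ne_zero
    obtain ⟨Ly, Uy, hLy, hUy, rfl⟩ := exists_isLowerUni_isUpperUni_eq_mul Cy h.det_snd_ne_zero
    have hV : Uy * Ux⁻¹ * Ux = Uy := by
      rw [mul_assoc, nonsing_inv_mul _ hUx.isUnit_det, mul_one]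
    have hprog : ProgressivePair 1 (Uy * Ux⁻¹) := by
      rwa [← progressivePair_mul_iff hLx hLy hUx, mul_one, mul_assoc Ly, hV]
    have hVP := eq_pascal_of_progressivePair_one (hUy.mul hUx.inv).isUpperTriangular_s14 hprog
    exact ⟨Ux, Lx, Ly, hUx, hLx, hLy, rfl, by rw [← hVP, mul_assoc Ly, hV]⟩
  · rintro ⟨U, Lx, Ly, hU, hLx, hLy, rfl, rfl⟩
    simpa using (progressivePair_mul_iff hLx hLy hU 1 (pascal m)).2 progressivePair_one_pascal
end
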